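/- In the setting of the bridge-model construction (finite model class 𝓜 of MF-MDPs sharing reward r with global L_T/L_r Lipschitz conditions; ε₀ > 0 with |B^{ε₀}_π(M_Ctr^π;𝓜)| > |𝓜|/2 for every π; ε̄ > 0 with 2H(H+1)((1+L_T)^H − 1)·ε̄ ≤ ε₀ and 2H·ε̄ ≤ ε₀; Π_ε̄ a finite ε̄-cover of Π; bridge transitions P̈_{Br,h} and rewards r̈_{Br,h} defined as the w_π-weighted averages of the central models' frozen kernels and rewards with weights w_π(π̃) := max{2ε̄ − d_{∞,1}(π,π̃), 0}), define the bridge return J̈_Br(π̃;π) := Σ_{h=1}^H Σ_{s,a} ν_h(s)·π̃_h(a|s)·r̈_{Br,h}(s,a,π), where ν_1 := μ₁ and ν_{h+1}(s') := Σ_{s,a} ν_h(s)·π̃_h(a|s)·P̈_{Br,h}(s'|s,a,π). Suppose π* ∈ Π is a Nash equilibrium of the bridge model, i.e., J̈_Br(π̃;π*) ≤ J̈_Br(π*;π*) for all π̃ ∈ Π. Then, with M* := M_Ctr^{π*} the central model of π*, the Nash-equilibrium gap of π* in M* satisfies max_{π̃∈Π} [J_{M*}(π̃;π*) − J_{M*}(π*;π*)]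 ≤ 2·(1 + L_r·H)·(H+4)·ε₀. -/

import Mathlib

/-- ℓ1 distance between two functions on a finite type. -/
def l1 {X : Type*} [Fintype X] (p q : X → ℝ) : ℝ := ∑ x, |p x - q x|

/-- A (nonstationary Markov) policy: at each step `h` (0-indexed) and state `s`,
`π h s` is a probability distribution over actions. -/
def IsPolicy {S A : Type*} [Fintype A] (π : ℕ → S → A → ℝ) : Prop :=
  ∀ h s, (∀ a, 0 ≤ π h s a) ∧ ∑ a, π h s a = 1

/-- The transition kernels of a mean-field MDP with horizon `H`:
at each step `h < H`, `P h s a μ ∈ Δ(S)` whenever `μ ∈ Δ(S)`. -/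
def IsKernel {S A : Type*} [Fintype S] (H : ℕ) (P : ℕ → S → A → (S → ℝ) → S → ℝ) : Prop :=
  ∀ h, h < H → ∀ s a (μ : S → ℝ), μ ∈ stdSimplex ℝ S → P h s a μ ∈ stdSimplex ℝ S

/-- Induced state densities: `dens P μ₁ π h = μ^π_{M,h+1}` (1-indexed step `h+1`). -/
def dens {S A : Type*} [Fintype S] [Fintype A] (P : ℕ → S → A → (S → ℝ) → S → ℝ)
    (μ₁ : S → ℝ) (π : ℕ → S → A → ℝ) : ℕ → S → ℝ
  | 0 => μ₁
  | h + 1 => fun s' => ∑ s, ∑ a, dens P μ₁ π h s * π h s a * P h s a (dens P μ₁ π h) s'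

/-- The state law of executing `π̃` while the kernels are frozen at the densities induced
by the reference policy `π` in model `M = (P, μ₁)`. -/
def densF {S A : Type*} [Fintype S] [Fintype A] (P : ℕ → S → A → (S → ℝ) → S → ℝ)
    (μ₁ : S → ℝ) (π πt : ℕ → S → A → ℝ) : ℕ → S → ℝ
  | 0 => μ₁
  | h + 1 => fun s' => ∑ s, ∑ a, densF P μ₁ π πt h s * πt h s a * P h s a (dens P μ₁ π h) s'

/-- `E_{π̃,M(π)}[Σ_{h=1}^H f_h(s_h,a_h)]`. -/
def expF {S A : Type*} [Fintype S] [Fintype A] (H : ℕ) (P : ℕ → S → A → (S → ℝ) → S → ℝ)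
    (μ₁ : S → ℝ) (π πt : ℕ → S → A → ℝ) (f : ℕ → S → A → ℝ) : ℝ :=
  ∑ h ∈ Finset.range H, ∑ s, ∑ a, densF P μ₁ π πt h s * πt h s a * f h s a

/-- The return `J_M(π̃;π)` of executing `π̃` with transitions and rewards frozen by `π`. -/
def Jret {S A : Type*} [Fintype S] [Fintype A] (H : ℕ) (P : ℕ → S → A → (S → ℝ) → S → ℝ)
    (r : ℕ → S → A → (S → ℝ) → ℝ) (μ₁ : S → ℝ) (πt π : ℕ → S → A → ℝ) : ℝ :=
  expF H P μ₁ π πt fun h s a => r h s a (dens P μ₁ π h)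

/-- One-sided conditional model distance `d^{π̃}(M,M'|π)`. -/
def dCond {S A : Type*} [Fintype S] [Fintype A] (H : ℕ)
    (P P' : ℕ → S → A → (S → ℝ) → S → ℝ) (μ₁ : S → ℝ) (π πt : ℕ → S → A → ℝ) : ℝ :=
  expF H P μ₁ π πt fun h s a => l1 (P h s a (dens P μ₁ π h)) (P' h s a (dens P' μ₁ π h))

/-- The distance `d_{∞,1}(π,π') = max_{h<H, s} ‖π_h(·|s) − π'_h(·|s)‖₁` on policies. -/
noncomputable def dInf {S A : Type*} [Fintype A] (H : ℕ) (π π' : ℕ → S → A → ℝ) : ℝ :=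
  sSup {x : ℝ | ∃ h < H, ∃ s : S, x = l1 (π h s) (π' h s)}

/-- The `ε₀`-neighborhood `B^{ε₀}_π(m;𝓜)` of the model `m` in the model class indexed by
`ι`, conditioned on the reference policy `π`. -/
def nbhd {S A ι : Type*} [Fintype S] [Fintype A] (H : ℕ)
    (P : ι → ℕ → S → A → (S → ℝ) → S → ℝ) (μ₁ : S → ℝ) (ε₀ : ℝ)
    (π : ℕ → S → A → ℝ) (m : ι) : Set ι :=
  {m' | ∀ πt, IsPolicy πt →
    dCond H (P m) (P m') μ₁ π πt ≤ ε₀ ∧ dCond H (P m') (P m) μ₁ π πt ≤ ε₀}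

/-- State law of executing `π̃` in a policy-aware model whose kernels are frozen by the
reference policy `π`. -/
def densPam {S A : Type*} [Fintype S] [Fintype A]
    (Pd : ℕ → S → A → (ℕ → S → A → ℝ) → S → ℝ)
    (μ₁ : S → ℝ) (π πt : ℕ → S → A → ℝ) : ℕ → S → ℝ
  | 0 => μ₁
  | h + 1 => fun s' => ∑ s, ∑ a, densPam Pd μ₁ π πt h s * πt h s a * Pd h s a π s'

/-- The return `J̈(π̃;π)` of executing `π̃` in a policy-aware model with transitions and
rewards frozen by the reference policy `π`. -/
def Jpam {S A : Type*} [Fintype S] [Fintype A] (H : ℕ)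
    (Pd : ℕ → S → A → (ℕ → S → A → ℝ) → S → ℝ)
    (rd : ℕ → S → A → (ℕ → S → A → ℝ) → ℝ)
    (μ₁ : S → ℝ) (πt π : ℕ → S → A → ℝ) : ℝ :=
  ∑ h ∈ Finset.range H, ∑ s, ∑ a, densPam Pd μ₁ π πt h s * πt h s a * rd h s a π

/-!
If the policies `π*` and `π̃` are `2ε̄`-close, the `ε₀`-neighbourhoods of their central models
each hold more than half of the model class, so they share a model `m`. Comparing
`M_Ctr^{π*}` with `m` under `π*`, moving from `π*` to `π̃` inside `m` (the induced mean fields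
drift by at most a geometric factor in `L_T`), and comparing `m` with `M_Ctr^{π̃}` under `π̃`
shows that the mean fields of the two central models are `4ε₀`-close and their frozen kernels
are `(H + 3)ε₀`-close along any policy. The bridge model at `π*` averages only such central
models, so by the simulation lemma every bridge return `J̈_Br(·;π*)` is within
`(4 L_r H + H + 3) ε₀` of `J_{M*}(·;π*)`, and a Nash equilibrium of the bridge model is a
`2 (4 L_r H + H + 3) ε₀`-equilibrium of `M*`.
-/

open Finset hiding dens

section L1

variable {X ι : Type*} [Fintype X]

lemma l1_nonneg (p q : X → ℝ) : 0 ≤ l1 p q :=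
  sum_nonneg fun _ _ => abs_nonneg _

lemma l1_self (p : X → ℝ) : l1 p p = 0 := by
  simp [l1]

lemma l1_triangle (p q r : X → ℝ) : l1 p r ≤ l1 p q + l1 q r := by
  rw [l1, l1, l1, ← sum_add_distrib]
  exact sum_le_sum fun x _ => abs_sub_le _ _ _

lemma l1_le_two {p q : X → ℝ} (hp : p ∈ stdSimplex ℝ X) (hq : q ∈ stdSimplex ℝ X) :
    l1 p q ≤ 2 := by
  calc l1 p q ≤ ∑ x, (p x + q x) := sum_le_sum fun x _ => by
        simpa [abs_of_nonneg (hp.1 x), abs_of_nonneg (hq.1 x)] using abs_sub (p x) (q x)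
    _ = 2 := by rw [sum_add_distrib, hp.2, hq.2]; norm_num

lemma l1_sum_smul_le (T : Finset ι) {x : ι → ℝ} (y : ι → ℝ) (p : ι → X → ℝ) {q : ι → X → ℝ}
    (hx : ∀ i ∈ T, 0 ≤ x i) (hq : ∀ i ∈ T, q i ∈ stdSimplex ℝ X) :
    l1 (∑ i ∈ T, x i • p i) (∑ i ∈ T, y i • q i) ≤
      ∑ i ∈ T, x i * l1 (p i) (q i) + ∑ i ∈ T, |x i - y i| := by
  have hpoint : ∀ z, |(∑ i ∈ T, x i • p i) z - (∑ i ∈ T, y i • q i) z| ≤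
      ∑ i ∈ T, (x i * |p i z - q i z| + |x i - y i| * q i z) := fun z => by
    have hsplit : (∑ i ∈ T, x i • p i) z - (∑ i ∈ T, y i • q i) z =
        ∑ i ∈ T, (x i * (p i z - q i z) + (x i - y i) * q i z) := by
      simp only [Finset.sum_apply, Pi.smul_apply, smul_eq_mul, ← sum_sub_distrib]
      exact sum_congr rfl fun i _ => by ring
    rw [hsplit]
    refine (abs_sum_le_sum_abs _ _).trans (sum_le_sum fun i hi => (abs_add_le _ _).trans ?_)
    rw [abs_mul, abs_mul, abs_of_nonneg (hx i hi), abs_of_nonneg ((hq i hi).1 z)]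
  calc l1 (∑ i ∈ T, x i • p i) (∑ i ∈ T, y i • q i)
      ≤ ∑ z, ∑ i ∈ T, (x i * |p i z - q i z| + |x i - y i| * q i z) :=
        sum_le_sum fun z _ => hpoint z
    _ = ∑ i ∈ T, x i * l1 (p i) (q i) + ∑ i ∈ T, |x i - y i| := by
      rw [sum_comm, ← sum_add_distrib]
      refine sum_congr rfl fun i hi => ?_
      rw [sum_add_distrib, ← mul_sum, ← mul_sum, (hq i hi).2, mul_one, l1]

lemma l1_sum_smul_right_le {T : Finset ι} {w : ι → ℝ} (hw₀ : ∀ i ∈ T, 0 ≤ w i)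
    (hw₁ : ∑ i ∈ T, w i = 1) (p : X → ℝ) {q : ι → X → ℝ} (hq : ∀ i ∈ T, q i ∈ stdSimplex ℝ X) :
    l1 p (∑ i ∈ T, w i • q i) ≤ ∑ i ∈ T, w i * l1 p (q i) := by
  simpa [← sum_smul, hw₁] using l1_sum_smul_le T w (fun _ => p) hw₀ hq

end L1

section WeightedAverage

variable {ι : Type*} {T : Finset ι} {w : ι → ℝ}

lemma sum_mul_le_of_ne_zero (hw₀ : ∀ i ∈ T, 0 ≤ w i) (hw₁ : ∑ i ∈ T, w i = 1) {e : ι → ℝ}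
    {C : ℝ} (he : ∀ i ∈ T, w i ≠ 0 → e i ≤ C) : ∑ i ∈ T, w i * e i ≤ C := by
  calc ∑ i ∈ T, w i * e i ≤ ∑ i ∈ T, w i * C := sum_le_sum fun i hi => by
        rcases eq_or_ne (w i) 0 with h | h
        · simp [h]
        · exact mul_le_mul_of_nonneg_left (he i hi h) (hw₀ i hi)
    _ = C := by rw [← sum_mul, hw₁, one_mul]

lemma abs_sub_sum_mul_le (hw₀ : ∀ i ∈ T, 0 ≤ w i) (hw₁ : ∑ i ∈ T, w i = 1) (x : ℝ)
    (c : ι → ℝ) : |x - ∑ i ∈ T, w i * c i| ≤ ∑ i ∈ T, w i * |x - c i| := by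
  have : x - ∑ i ∈ T, w i * c i = ∑ i ∈ T, w i * (x - c i) := by
    simp only [mul_sub, sum_sub_distrib, ← sum_mul, hw₁, one_mul]
  rw [this]
  refine (abs_sum_le_sum_abs _ _).trans (le_of_eq (sum_congr rfl fun i hi => ?_))
  rw [abs_mul, abs_of_nonneg (hw₀ i hi)]

lemma sum_mul_div_sum (w f : ι → ℝ) :
    (∑ i ∈ T, w i * f i) / ∑ i ∈ T, w i = ∑ i ∈ T, w i / (∑ j ∈ T, w j) * f i := by
  rw [sum_div]
  exact sum_congr rfl fun i _ => mul_div_right_comm _ _ _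

end WeightedAverage

section StepExp

variable {S A : Type*} [Fintype S] [Fintype A]

def stepExp (ν : S → ℝ) (σ : S → A → ℝ) (f : S → A → ℝ) : ℝ :=
  ∑ s, ∑ a, ν s * σ s a * f s a

def stepLaw (ν : S → ℝ) (σ : S → A → ℝ) (K : S → A → S → ℝ) : S → ℝ :=
  fun s' => stepExp ν σ fun s a => K s a s'

variable {ν ν' : S → ℝ} {σ σ' : S → A → ℝ}

lemma stepExp_mono (hν : ν ∈ stdSimplex ℝ S) (hσ : ∀ s, σ s ∈ stdSimplex ℝ A)
    {f g : S → A → ℝ} (hfg : ∀ s a, f s a ≤ g s a) : stepExp ν σ f ≤ stepExp ν σ g :=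
  sum_le_sum fun s _ => sum_le_sum fun a _ =>
    mul_le_mul_of_nonneg_left (hfg s a) (mul_nonneg (hν.1 s) ((hσ s).1 a))

lemma stepExp_const (hν : ν ∈ stdSimplex ℝ S) (hσ : ∀ s, σ s ∈ stdSimplex ℝ A) (c : ℝ) :
    stepExp ν σ (fun _ _ => c) = c := by
  simp only [stepExp, mul_assoc, ← mul_sum, ← sum_mul, (hσ _).2, one_mul, hν.2]

lemma stepExp_le (hν : ν ∈ stdSimplex ℝ S) (hσ : ∀ s, σ s ∈ stdSimplex ℝ A)
    {f : S → A → ℝ} {C : ℝ} (hf : ∀ s a, f s a ≤ C) : stepExp ν σ f ≤ C :=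
  (stepExp_mono hν hσ hf).trans (stepExp_const hν hσ C).le

lemma stepExp_nonneg (hν : ν ∈ stdSimplex ℝ S) (hσ : ∀ s, σ s ∈ stdSimplex ℝ A)
    {f : S → A → ℝ} (hf : ∀ s a, 0 ≤ f s a) : 0 ≤ stepExp ν σ f :=
  (stepExp_const hν hσ 0).symm.le.trans (stepExp_mono hν hσ hf)

lemma stepExp_add (f g : S → A → ℝ) :
    stepExp ν σ (fun s a => f s a + g s a) = stepExp ν σ f + stepExp ν σ g := by
  simp only [stepExp, mul_add, sum_add_distrib]

lemma stepExp_sum {ι : Type*} (T : Finset ι) (c : ι → ℝ) (f : ι → S → A → ℝ) :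
    stepExp ν σ (fun s a => ∑ i ∈ T, c i * f i s a) = ∑ i ∈ T, c i * stepExp ν σ (f i) := by
  simp only [stepExp, mul_sum]
  conv_rhs => rw [sum_comm]
  refine sum_congr rfl fun s _ => ?_
  conv_rhs => rw [sum_comm]
  exact sum_congr rfl fun a _ => sum_congr rfl fun i _ => by ring

lemma stepExp_sub (f g : S → A → ℝ) :
    stepExp ν σ (fun s a => f s a - g s a) = stepExp ν σ f - stepExp ν σ g := by
  simp only [stepExp, mul_sub, sum_sub_distrib]

lemma abs_stepExp_le (hν : ν ∈ stdSimplex ℝ S) (hσ : ∀ s, σ s ∈ stdSimplex ℝ A)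
    (f : S → A → ℝ) : |stepExp ν σ f| ≤ stepExp ν σ fun s a => |f s a| := by
  refine (abs_sum_le_sum_abs _ _).trans (sum_le_sum fun s _ =>
    (abs_sum_le_sum_abs _ _).trans (le_of_eq (sum_congr rfl fun a _ => ?_)))
  rw [abs_mul, abs_mul, abs_of_nonneg (hν.1 s), abs_of_nonneg ((hσ s).1 a)]

/-- Both laws have mass one, so `g` may be recentred at any `c` before comparing them. -/
lemma abs_stepExp_sub_stepExp_le (hν : ν ∈ stdSimplex ℝ S) (hν' : ν' ∈ stdSimplex ℝ S)
    (hσ : ∀ s, σ s ∈ stdSimplex ℝ A) {g : S → A → ℝ} {c C : ℝ} (hg : ∀ s a, |g s a - c| ≤ C) :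
    |stepExp ν σ g - stepExp ν' σ g| ≤ C * l1 ν ν' := by
  have hG : ∀ s, |∑ a, σ s a * g s a - c| ≤ C := fun s => by
    rw [abs_sub_comm]
    refine (abs_sub_sum_mul_le (fun a _ => (hσ s).1 a) (hσ s).2 c (g s)).trans ?_
    exact sum_mul_le_of_ne_zero (fun a _ => (hσ s).1 a) (hσ s).2 fun a _ _ => by
      rw [abs_sub_comm]; exact hg s a
  have hdiff : stepExp ν σ g - stepExp ν' σ g =
      ∑ s, (ν s - ν' s) * (∑ a, σ s a * g s a - c) := by
    simp only [stepExp, mul_sub, sub_mul, sum_sub_distrib, ← sum_mul, hν.2, hν'.2, mul_sum,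
      mul_assoc]
    ring
  rw [hdiff, l1, mul_sum]
  refine (abs_sum_le_sum_abs _ _).trans (sum_le_sum fun s _ => ?_)
  rw [abs_mul, mul_comm C]
  exact mul_le_mul_of_nonneg_left (hG s) (abs_nonneg _)

lemma stepLaw_eq_sum_smul (K : S → A → S → ℝ) :
    stepLaw ν σ K = ∑ x : S × A, (ν x.1 * σ x.1 x.2) • K x.1 x.2 := by
  funext s'
  simp only [stepLaw, stepExp, Finset.sum_apply, Pi.smul_apply, smul_eq_mul]
  exact (Fintype.sum_prod_type' _).symm

lemma sum_abs_mul_sub_mul_le (hν' : 0 ≤ ν') (hσ : ∀ s, σ s ∈ stdSimplex ℝ A) :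
    ∑ s, ∑ a, |ν s * σ s a - ν' s * σ' s a| ≤ l1 ν ν' + ∑ s, ν' s * l1 (σ s) (σ' s) := by
  calc ∑ s, ∑ a, |ν s * σ s a - ν' s * σ' s a|
      ≤ ∑ s, ∑ a, (|ν s - ν' s| * σ s a + ν' s * |σ s a - σ' s a|) :=
        sum_le_sum fun s _ => sum_le_sum fun a _ => by
          calc |ν s * σ s a - ν' s * σ' s a|
              = |(ν s - ν' s) * σ s a + ν' s * (σ s a - σ' s a)| := by ring_nf
            _ ≤ _ := (abs_add_le _ _).trans_eq <| by
              rw [abs_mul, abs_mul, abs_of_nonneg ((hσ s).1 a), abs_of_nonneg (hν' s)]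
    _ = l1 ν ν' + ∑ s, ν' s * l1 (σ s) (σ' s) := by
      simp only [sum_add_distrib, ← mul_sum, (hσ _).2, mul_one, l1]

lemma l1_stepLaw_le (hν : 0 ≤ ν) (hν' : 0 ≤ ν') (hσ : ∀ s, σ s ∈ stdSimplex ℝ A)
    {K K' : S → A → S → ℝ} (hK' : ∀ s a, K' s a ∈ stdSimplex ℝ S) :
    l1 (stepLaw ν σ K) (stepLaw ν' σ' K') ≤
      stepExp ν σ (fun s a => l1 (K s a) (K' s a)) + l1 ν ν' +
        ∑ s, ν' s * l1 (σ s) (σ' s) := by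
  rw [stepLaw_eq_sum_smul, stepLaw_eq_sum_smul, add_assoc]
  refine (l1_sum_smul_le univ _ _ (fun x _ => mul_nonneg (hν x.1) ((hσ x.1).1 x.2))
    fun x _ => hK' x.1 x.2).trans (add_le_add (le_of_eq ?_) ?_)
  · exact Fintype.sum_prod_type' (fun s a => ν s * σ s a * l1 (K s a) (K' s a))
  · rw [Fintype.sum_prod_type' (fun s a => |ν s * σ s a - ν' s * σ' s a|)]
    exact sum_abs_mul_sub_mul_le hν' hσ

lemma stepLaw_mem_stdSimplex (hν : ν ∈ stdSimplex ℝ S) (hσ : ∀ s, σ s ∈ stdSimplex ℝ A)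
    {K : S → A → S → ℝ} (hK : ∀ s a, K s a ∈ stdSimplex ℝ S) :
    stepLaw ν σ K ∈ stdSimplex ℝ S := by
  rw [stepLaw_eq_sum_smul]
  exact (convex_stdSimplex ℝ S).sum_mem (fun x _ => mul_nonneg (hν.1 x.1) ((hσ x.1).1 x.2))
    (by simpa [stepExp, ← Fintype.sum_prod_type'] using stepExp_const hν hσ 1)
    fun x _ => hK x.1 x.2

end StepExp

section Chain

variable {S A : Type*} [Fintype S] [Fintype A]

def IsStochastic (H : ℕ) (K : ℕ → S → A → S → ℝ) : Prop :=
  ∀ h < H, ∀ s a, K h s a ∈ stdSimplex ℝ S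

def chain (K : ℕ → S → A → S → ℝ) (μ₁ : S → ℝ) (σ : ℕ → S → A → ℝ) : ℕ → S → ℝ
  | 0 => μ₁
  | h + 1 => stepLaw (chain K μ₁ σ h) (σ h) (K h)

def chainExp (H : ℕ) (K : ℕ → S → A → S → ℝ) (μ₁ : S → ℝ) (σ : ℕ → S → A → ℝ)
    (f : ℕ → S → A → ℝ) : ℝ :=
  ∑ h ∈ range H, stepExp (chain K μ₁ σ h) (σ h) (f h)

variable {H : ℕ} {K : ℕ → S → A → S → ℝ} {μ₁ : S → ℝ} {σ : ℕ → S → A → ℝ}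

lemma chain_mem_stdSimplex (hμ₁ : μ₁ ∈ stdSimplex ℝ S) (hσ : IsPolicy σ)
    (hK : IsStochastic H K) : ∀ h ≤ H, chain K μ₁ σ h ∈ stdSimplex ℝ S
  | 0, _ => hμ₁
  | h + 1, hh =>
    stepLaw_mem_stdSimplex (chain_mem_stdSimplex hμ₁ hσ hK h (by omega)) (hσ h) (hK h hh)

lemma chainExp_succ (f : ℕ → S → A → ℝ) :
    chainExp (H + 1) K μ₁ σ f = chainExp H K μ₁ σ f + stepExp (chain K μ₁ σ H) (σ H) (f H) :=
  sum_range_succ _ _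

lemma chainExp_add (f g : ℕ → S → A → ℝ) :
    chainExp H K μ₁ σ (fun h s a => f h s a + g h s a) =
      chainExp H K μ₁ σ f + chainExp H K μ₁ σ g := by
  simp only [chainExp, stepExp_add, sum_add_distrib]

lemma chainExp_sum {ι : Type*} (T : Finset ι) (c : ι → ℝ) (f : ι → ℕ → S → A → ℝ) :
    chainExp H K μ₁ σ (fun h s a => ∑ i ∈ T, c i * f i h s a) =
      ∑ i ∈ T, c i * chainExp H K μ₁ σ (f i) := by
  simp only [chainExp, stepExp_sum, mul_sum]
  exact sum_comm

section Expectation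

variable (hμ₁ : μ₁ ∈ stdSimplex ℝ S) (hσ : IsPolicy σ) (hK : IsStochastic H K)
include hμ₁ hσ hK

lemma chainExp_mono {f g : ℕ → S → A → ℝ} (hfg : ∀ h < H, ∀ s a, f h s a ≤ g h s a) :
    chainExp H K μ₁ σ f ≤ chainExp H K μ₁ σ g :=
  sum_le_sum fun h hh => stepExp_mono (chain_mem_stdSimplex hμ₁ hσ hK h (mem_range.1 hh).le)
    (hσ h) (hfg h (mem_range.1 hh))

lemma chainExp_le_mul {f : ℕ → S → A → ℝ} {C : ℝ} (hf : ∀ h < H, ∀ s a, f h s a ≤ C) :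
    chainExp H K μ₁ σ f ≤ H * C := by
  calc chainExp H K μ₁ σ f ≤ ∑ _h ∈ range H, C :=
        sum_le_sum fun h hh => stepExp_le (chain_mem_stdSimplex hμ₁ hσ hK h
          (mem_range.1 hh).le) (hσ h) (hf h (mem_range.1 hh))
    _ = H * C := by rw [sum_const, card_range, nsmul_eq_mul]

lemma chainExp_le_chainExp_of_le {h : ℕ} (hh : h ≤ H) {f : ℕ → S → A → ℝ}
    (hf : ∀ g < H, ∀ s a, 0 ≤ f g s a) : chainExp h K μ₁ σ f ≤ chainExp H K μ₁ σ f :=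
  sum_le_sum_of_subset_of_nonneg (range_subset_range.2 hh) fun g hg _ =>
    stepExp_nonneg (chain_mem_stdSimplex hμ₁ hσ hK g (mem_range.1 hg).le) (hσ g)
      (hf g (mem_range.1 hg))

lemma chainExp_l1_triangle (J₁ J₂ J₃ : ℕ → S → A → S → ℝ) :
    (chainExp H K μ₁ σ fun h s a => l1 (J₁ h s a) (J₃ h s a)) ≤
      (chainExp H K μ₁ σ fun h s a => l1 (J₁ h s a) (J₂ h s a)) +
        chainExp H K μ₁ σ fun h s a => l1 (J₂ h s a) (J₃ h s a) := by
  rw [← chainExp_add]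
  exact chainExp_mono hμ₁ hσ hK fun h _ s a => l1_triangle _ _ _

section Comparison

variable {K' : ℕ → S → A → S → ℝ} (hK' : IsStochastic H K')
include hK'

/-- The simulation lemma. -/
lemma l1_chain_le_chainExp {h : ℕ} (hh : h ≤ H) :
    l1 (chain K μ₁ σ h) (chain K' μ₁ σ h) ≤
      chainExp H K μ₁ σ fun g s a => l1 (K g s a) (K' g s a) := by
  refine le_trans ?_ (chainExp_le_chainExp_of_le hμ₁ hσ hK hh fun _ _ _ _ => l1_nonneg _ _)
  induction h with
  | zero => simp [chain, chainExp, l1_self]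
  | succ h ih =>
    have hstep := l1_stepLaw_le (K := K h) (σ' := σ h)
      (chain_mem_stdSimplex hμ₁ hσ hK h (by omega)).1
      (chain_mem_stdSimplex hμ₁ hσ hK' h (by omega)).1 (hσ h) (hK' h hh)
    simp only [l1_self, mul_zero, sum_const_zero, add_zero] at hstep
    rw [chainExp_succ]
    exact hstep.trans (by linarith [ih (by omega)])

/-- Recentring `g` at `1` makes the change of measure cost `l1` rather than `2 • l1`. -/
lemma chainExp_le_chainExp_add {g : ℕ → S → A → ℝ} (hg : ∀ h < H, ∀ s a, g h s a ∈ Set.Icc 0 2) :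
    chainExp H K μ₁ σ g ≤
      chainExp H K' μ₁ σ g + H * chainExp H K μ₁ σ fun h s a => l1 (K h s a) (K' h s a) := by
  calc chainExp H K μ₁ σ g ≤ ∑ h ∈ range H, (stepExp (chain K' μ₁ σ h) (σ h) (g h) +
        chainExp H K μ₁ σ fun h s a => l1 (K h s a) (K' h s a)) := sum_le_sum fun h hh => by
        have hh := mem_range.1 hh
        have hshift := abs_stepExp_sub_stepExp_le (chain_mem_stdSimplex hμ₁ hσ hK h hh.le)
          (chain_mem_stdSimplex hμ₁ hσ hK' h hh.le) (hσ h) (c := 1) (C := 1) fun s a =>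
            abs_le.2 ⟨by linarith [(hg h hh s a).1], by linarith [(hg h hh s a).2]⟩
        linarith [le_abs_self (stepExp (chain K μ₁ σ h) (σ h) (g h) -
          stepExp (chain K' μ₁ σ h) (σ h) (g h)), l1_chain_le_chainExp hμ₁ hσ hK hK' hh.le]
    _ = _ := by rw [sum_add_distrib, sum_const, card_range, nsmul_eq_mul]; rfl

lemma abs_chainExp_sub_chainExp_le {f f' : ℕ → S → A → ℝ} {C : ℝ} (hC : 0 ≤ C)
    (hf' : ∀ h < H, ∀ s a, |f' h s a| ≤ C) :
    |chainExp H K μ₁ σ f - chainExp H K' μ₁ σ f'| ≤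
      chainExp H K μ₁ σ (fun h s a => |f h s a - f' h s a|) +
        H * C * chainExp H K μ₁ σ fun h s a => l1 (K h s a) (K' h s a) := by
  set D := chainExp H K μ₁ σ fun h s a => l1 (K h s a) (K' h s a)
  calc |chainExp H K μ₁ σ f - chainExp H K' μ₁ σ f'|
      ≤ ∑ h ∈ range H, ((stepExp (chain K μ₁ σ h) (σ h) fun s a => |f h s a - f' h s a|) +
          C * D) := by
        rw [chainExp, chainExp, ← sum_sub_distrib]
        refine (abs_sum_le_sum_abs _ _).trans (sum_le_sum fun h hh => ?_)
        have hh := mem_range.1 hh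
        have hν := chain_mem_stdSimplex hμ₁ hσ hK h hh.le
        have hdiff := abs_stepExp_le hν (hσ h) fun s a => f h s a - f' h s a
        rw [stepExp_sub] at hdiff
        have hshift := abs_stepExp_sub_stepExp_le hν (chain_mem_stdSimplex hμ₁ hσ hK' h hh.le)
          (hσ h) (c := 0) fun s a => by simpa using hf' h hh s a
        have hsim := mul_le_mul_of_nonneg_left (l1_chain_le_chainExp hμ₁ hσ hK hK' hh.le) hC
        have htri := abs_sub_le (stepExp (chain K μ₁ σ h) (σ h) (f h))
          (stepExp (chain K μ₁ σ h) (σ h) (f' h)) (stepExp (chain K' μ₁ σ h) (σ h) (f' h))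
        linarith
    _ = _ := by rw [sum_add_distrib, sum_const, card_range, nsmul_eq_mul, mul_assoc]; rfl

end Comparison

lemma abs_chainExp_sub_mixture_le {ι : Type*} {T : Finset ι} {w : ι → ℝ}
    (hw₀ : ∀ i ∈ T, 0 ≤ w i) (hw₁ : ∑ i ∈ T, w i = 1) {Kt : ι → ℕ → S → A → S → ℝ}
    (hKt : ∀ i ∈ T, IsStochastic H (Kt i)) {f : ℕ → S → A → ℝ} {ft : ι → ℕ → S → A → ℝ}
    {α C D : ℝ} (hC : 0 ≤ C) (hft : ∀ i ∈ T, ∀ h < H, ∀ s a, |ft i h s a| ≤ C)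
    (hf : ∀ i ∈ T, w i ≠ 0 → ∀ h < H, ∀ s a, |f h s a - ft i h s a| ≤ α)
    (hD : ∀ i ∈ T, w i ≠ 0 →
      (chainExp H K μ₁ σ fun h s a => l1 (K h s a) (Kt i h s a)) ≤ D) :
    |chainExp H K μ₁ σ f - chainExp H (fun h s a => ∑ i ∈ T, w i • Kt i h s a) μ₁ σ
        (fun h s a => ∑ i ∈ T, w i * ft i h s a)| ≤ H * α + H * C * D := by
  have hKmix : IsStochastic H fun h s a => ∑ i ∈ T, w i • Kt i h s a := fun h hh s a =>
    (convex_stdSimplex ℝ S).sum_mem hw₀ hw₁ fun i hi => hKt i hi h hh s a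
  have hfmix : ∀ h < H, ∀ s a, |∑ i ∈ T, w i * ft i h s a| ≤ C := fun h hh s a =>
    abs_le.2 ((convex_Icc (-C) C).sum_mem hw₀ hw₁ fun i hi => abs_le.1 (hft i hi h hh s a))
  refine (abs_chainExp_sub_chainExp_le hμ₁ hσ hK hKmix hC hfmix).trans (add_le_add ?_ ?_)
  · refine chainExp_le_mul hμ₁ hσ hK fun h hh s a => ?_
    exact (abs_sub_sum_mul_le hw₀ hw₁ _ _).trans
      (sum_mul_le_of_ne_zero hw₀ hw₁ fun i hi hwi => hf i hi hwi h hh s a)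
  · refine mul_le_mul_of_nonneg_left ?_ (by positivity)
    calc (chainExp H K μ₁ σ fun h s a => l1 (K h s a) (∑ i ∈ T, w i • Kt i h s a))
        ≤ chainExp H K μ₁ σ fun h s a => ∑ i ∈ T, w i * l1 (K h s a) (Kt i h s a) :=
          chainExp_mono hμ₁ hσ hK fun h hh s a =>
            l1_sum_smul_right_le hw₀ hw₁ _ fun i hi => hKt i hi h hh s a
      _ ≤ D := by
          rw [chainExp_sum]
          exact sum_mul_le_of_ne_zero hw₀ hw₁ hD

end Expectation

end Chain

section MeanField

variable {S A : Type*} [Fintype S] [Fintype A] {H : ℕ} {P P' : ℕ → S → A → (S → ℝ) → S → ℝ}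
  {μ₁ : S → ℝ} {π σ : ℕ → S → A → ℝ}

def frozenKernel (P : ℕ → S → A → (S → ℝ) → S → ℝ) (μ₁ : S → ℝ) (π : ℕ → S → A → ℝ) :
    ℕ → S → A → S → ℝ :=
  fun h s a => P h s a (dens P μ₁ π h)

lemma densF_eq_chain : densF P μ₁ π σ = chain (frozenKernel P μ₁ π) μ₁ σ := by
  funext h
  induction h with
  | zero => rfl
  | succ h ih => funext s'; simp only [densF, chain, stepLaw, stepExp, frozenKernel, ih]

lemma dens_eq_densF : dens P μ₁ π = densF P μ₁ π π := by
  funext h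
  induction h with
  | zero => rfl
  | succ h ih => funext s'; simp only [dens, densF, ih]

lemma dens_eq_chain : dens P μ₁ π = chain (frozenKernel P μ₁ π) μ₁ π := by
  rw [dens_eq_densF, densF_eq_chain]

lemma densPam_eq_chain (Pd : ℕ → S → A → (ℕ → S → A → ℝ) → S → ℝ) :
    densPam Pd μ₁ π σ = chain (fun h s a => Pd h s a π) μ₁ σ := by
  funext h
  induction h with
  | zero => rfl
  | succ h ih => funext s'; simp only [densPam, chain, stepLaw, stepExp, ih]

lemma expF_eq_chainExp (f : ℕ → S → A → ℝ) :
    expF H P μ₁ π σ f = chainExp H (frozenKernel P μ₁ π) μ₁ σ f := by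
  rw [expF, densF_eq_chain]; rfl

lemma Jret_eq_chainExp (r : ℕ → S → A → (S → ℝ) → ℝ) :
    Jret H P r μ₁ σ π =
      chainExp H (frozenKernel P μ₁ π) μ₁ σ fun h s a => r h s a (dens P μ₁ π h) :=
  expF_eq_chainExp _

lemma dCond_eq_chainExp :
    dCond H P P' μ₁ π σ = chainExp H (frozenKernel P μ₁ π) μ₁ σ
      fun h s a => l1 (frozenKernel P μ₁ π h s a) (frozenKernel P' μ₁ π h s a) :=
  expF_eq_chainExp _

lemma Jpam_eq_chainExp (Pd : ℕ → S → A → (ℕ → S → A → ℝ) → S → ℝ)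
    (rd : ℕ → S → A → (ℕ → S → A → ℝ) → ℝ) :
    Jpam H Pd rd μ₁ σ π = chainExp H (fun h s a => Pd h s a π) μ₁ σ fun h s a => rd h s a π := by
  rw [Jpam, densPam_eq_chain]; rfl

variable (hμ₁ : μ₁ ∈ stdSimplex ℝ S)
include hμ₁

lemma dens_mem_stdSimplex (hP : IsKernel H P) (hπ : IsPolicy π) :
    ∀ h ≤ H, dens P μ₁ π h ∈ stdSimplex ℝ S
  | 0, _ => hμ₁
  | h + 1, hh => by
    have hν := dens_mem_stdSimplex hP hπ h (by omega)
    exact stepLaw_mem_stdSimplex hν (hπ h) fun s a => hP h hh s a _ hν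

lemma isStochastic_frozenKernel (hP : IsKernel H P) (hπ : IsPolicy π) :
    IsStochastic H (frozenKernel P μ₁ π) := fun h hh s a =>
  hP h hh s a _ (dens_mem_stdSimplex hμ₁ hP hπ h hh.le)

lemma l1_dens_le_dCond (hP : IsKernel H P) (hP' : IsKernel H P') (hπ : IsPolicy π) {h : ℕ}
    (hh : h ≤ H) : l1 (dens P μ₁ π h) (dens P' μ₁ π h) ≤ dCond H P P' μ₁ π π := by
  rw [dens_eq_chain, dens_eq_chain (P := P'), dCond_eq_chainExp]
  exact l1_chain_le_chainExp hμ₁ hπ (isStochastic_frozenKernel hμ₁ hP hπ)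
    (isStochastic_frozenKernel hμ₁ hP' hπ) hh

lemma l1_dens_le_of_policy_close (hP : IsKernel H P) {L : ℝ} (hL : 0 ≤ L)
    (hPlip : ∀ h < H, ∀ s a, ∀ μ ∈ stdSimplex ℝ S, ∀ μ' ∈ stdSimplex ℝ S,
      l1 (P h s a μ) (P h s a μ') ≤ L * l1 μ μ')
    {π' : ℕ → S → A → ℝ} (hπ : IsPolicy π) (hπ' : IsPolicy π') {δ : ℝ}
    (hclose : ∀ h < H, ∀ s, l1 (π h s) (π' h s) ≤ δ) :
    ∀ h ≤ H, l1 (dens P μ₁ π h) (dens P μ₁ π' h) ≤ δ * ∑ j ∈ range h, (1 + L) ^ j := by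
  intro h
  induction h with
  | zero => simp [dens, l1_self]
  | succ h ih =>
    intro hh
    have hν := dens_mem_stdSimplex hμ₁ hP hπ h (by omega)
    have hν' := dens_mem_stdSimplex hμ₁ hP hπ' h (by omega)
    have hstep := l1_stepLaw_le (K := fun s a => P h s a (dens P μ₁ π h)) (σ' := π' h) hν.1
      hν'.1 (hπ h) fun s a => hP h hh s a _ hν'
    have hkernel := stepExp_le hν (hπ h) fun s a => hPlip h hh s a _ hν _ hν'
    have hpolicy : ∑ s, dens P μ₁ π' h s * l1 (π h s) (π' h s) ≤ δ :=
      (sum_le_sum fun s _ => mul_le_mul_of_nonneg_left (hclose h hh s) (hν'.1 s)).trans_eq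
        (by rw [← sum_mul, hν'.2, one_mul])
    have hprev := mul_le_mul_of_nonneg_left (ih (by omega)) (by linarith : 0 ≤ 1 + L)
    rw [geom_sum_succ]
    exact hstep.trans (by linarith)

end MeanField

lemma mul_geom_sum_le {L : ℝ} (hL : 0 ≤ L) {h H : ℕ} (hh : h ≤ H) :
    L * ∑ j ∈ range h, (1 + L) ^ j ≤ (1 + L) ^ H - 1 := by
  have hgeom := geom_sum_mul (1 + L) h
  rw [add_sub_cancel_left] at hgeom
  rw [mul_comm, hgeom]
  gcongr
  linarith

lemma geom_sum_le_mul_pow {L : ℝ} (hL : 0 ≤ L) {h H : ℕ} (hh : h ≤ H) :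
    ∑ j ∈ range h, (1 + L) ^ j ≤ H * (1 + L) ^ H := by
  calc ∑ j ∈ range h, (1 + L) ^ j ≤ ∑ _j ∈ range h, (1 + L) ^ H :=
        sum_le_sum fun j hj => pow_le_pow_right₀ (by linarith) ((mem_range.1 hj).le.trans hh)
    _ ≤ H * (1 + L) ^ H := by
        rw [sum_const, card_range, nsmul_eq_mul]
        gcongr

section CommonNeighbor

variable {S A : Type*} [Fintype S] [Fintype A] {H : ℕ} {P₁ P₂ P₃ : ℕ → S → A → (S → ℝ) → S → ℝ}
  {μ₁ : S → ℝ} {π π' : ℕ → S → A → ℝ} {L δ ε₀ : ℝ}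

variable (hμ₁ : μ₁ ∈ stdSimplex ℝ S) (hP₁ : IsKernel H P₁) (hP₂ : IsKernel H P₂)
  (hP₃ : IsKernel H P₃) (hL : 0 ≤ L)
  (hP₂lip : ∀ h < H, ∀ s a, ∀ μ ∈ stdSimplex ℝ S, ∀ μ' ∈ stdSimplex ℝ S,
    l1 (P₂ h s a μ) (P₂ h s a μ') ≤ L * l1 μ μ')
  (hπ : IsPolicy π) (hπ' : IsPolicy π') (hδ : 0 ≤ δ)
  (hclose : ∀ h < H, ∀ s, l1 (π h s) (π' h s) ≤ δ)
  (hδ₁ : H * (H + 1) * ((1 + L) ^ H - 1) * δ ≤ ε₀)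
include hμ₁ hP₁ hP₂ hP₃ hL hP₂lip hπ hπ' hδ hclose hδ₁

lemma l1_dens_le_of_common_neighbor (hδ₂ : H * δ ≤ ε₀) (h₁₂ : dCond H P₁ P₂ μ₁ π π ≤ ε₀)
    (h₂₃ : dCond H P₂ P₃ μ₁ π' π' ≤ ε₀) {h : ℕ} (hh : h ≤ H) :
    l1 (dens P₁ μ₁ π h) (dens P₃ μ₁ π' h) ≤ 4 * ε₀ := by
  have hX : 0 ≤ (1 + L) ^ H - 1 := by linarith [one_le_pow₀ (by linarith : 1 ≤ 1 + L) (n := H)]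
  have hpolicy := l1_dens_le_of_policy_close hμ₁ hP₂ hL hP₂lip hπ hπ' hclose h hh
  have hgeom := mul_le_mul_of_nonneg_left (geom_sum_le_mul_pow hL hh) hδ
  have hHX : (H : ℝ) * ((1 + L) ^ H - 1) * δ ≤ ε₀ :=
    le_trans (by nlinarith [mul_nonneg (mul_nonneg (Nat.cast_nonneg H) hX) hδ]) hδ₁
  have h12 := (l1_dens_le_dCond hμ₁ hP₁ hP₂ hπ hh).trans h₁₂
  have h23 := (l1_dens_le_dCond hμ₁ hP₂ hP₃ hπ' hh).trans h₂₃
  linarith [l1_triangle (dens P₁ μ₁ π h) (dens P₂ μ₁ π h) (dens P₃ μ₁ π' h),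
    l1_triangle (dens P₂ μ₁ π h) (dens P₂ μ₁ π' h) (dens P₃ μ₁ π' h)]

lemma chainExp_l1_frozenKernel_le_of_common_neighbor
    (h₁₂ : ∀ σ, IsPolicy σ → dCond H P₁ P₂ μ₁ π σ ≤ ε₀)
    (h₂₃ : ∀ σ, IsPolicy σ → dCond H P₂ P₃ μ₁ π' σ ≤ ε₀) {σ : ℕ → S → A → ℝ} (hσ : IsPolicy σ) :
    (chainExp H (frozenKernel P₁ μ₁ π) μ₁ σ fun h s a =>
      l1 (frozenKernel P₁ μ₁ π h s a) (frozenKernel P₃ μ₁ π' h s a)) ≤ (H + 3) * ε₀ := by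
  set K₁ := frozenKernel P₁ μ₁ π
  set K₂ := frozenKernel P₂ μ₁ π
  set K₃ := frozenKernel P₂ μ₁ π'
  set K₄ := frozenKernel P₃ μ₁ π'
  have hK₁ := isStochastic_frozenKernel hμ₁ hP₁ hπ
  have hK₃ := isStochastic_frozenKernel hμ₁ hP₂ hπ'
  have hK₄ := isStochastic_frozenKernel hμ₁ hP₃ hπ'
  set β := ((1 + L) ^ H - 1) * δ
  have h12 : (chainExp H K₁ μ₁ σ fun h s a => l1 (K₁ h s a) (K₂ h s a)) ≤ ε₀ :=
    dCond_eq_chainExp (P' := P₂) ▸ h₁₂ σ hσ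
  have h23 : (chainExp H K₁ μ₁ σ fun h s a => l1 (K₂ h s a) (K₃ h s a)) ≤ H * β := by
    refine chainExp_le_mul hμ₁ hσ hK₁ fun h hh s a => ?_
    refine (hP₂lip h hh s a _ (dens_mem_stdSimplex hμ₁ hP₂ hπ h hh.le) _
      (dens_mem_stdSimplex hμ₁ hP₂ hπ' h hh.le)).trans ?_
    have hpolicy := l1_dens_le_of_policy_close hμ₁ hP₂ hL hP₂lip hπ hπ' hclose h hh.le
    calc L * l1 (dens P₂ μ₁ π h) (dens P₂ μ₁ π' h)
        ≤ L * (δ * ∑ j ∈ range h, (1 + L) ^ j) := mul_le_mul_of_nonneg_left hpolicy hL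
      _ = (L * ∑ j ∈ range h, (1 + L) ^ j) * δ := by ring
      _ ≤ β := mul_le_mul_of_nonneg_right (mul_geom_sum_le hL hh.le) hδ
  have h34 : (chainExp H K₃ μ₁ σ fun h s a => l1 (K₃ h s a) (K₄ h s a)) ≤ ε₀ :=
    dCond_eq_chainExp (P := P₂) ▸ h₂₃ σ hσ
  have hshift := chainExp_le_chainExp_add hμ₁ hσ hK₁ hK₃
    (g := fun h s a => l1 (K₃ h s a) (K₄ h s a))
    fun h hh s a => ⟨l1_nonneg _ _, l1_le_two (hK₃ h hh s a) (hK₄ h hh s a)⟩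
  have h13 := chainExp_l1_triangle hμ₁ hσ hK₁ K₁ K₂ K₃
  have h14 := chainExp_l1_triangle hμ₁ hσ hK₁ K₁ K₃ K₄
  have hβ : (H : ℝ) * (H + 1) * β ≤ ε₀ := by simpa only [β, mul_assoc] using hδ₁
  have hH := mul_le_mul_of_nonneg_left (h13.trans (add_le_add h12 h23)) (Nat.cast_nonneg H)
  linarith

end CommonNeighbor

lemma Set.inter_nonempty_of_card_lt_two_mul_ncard {ι : Type*} [Fintype ι] {s t : Set ι}
    (hs : Fintype.card ι < 2 * s.ncard) (ht : Fintype.card ι < 2 * t.ncard) :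
    (s ∩ t).Nonempty := by
  by_contra hempty
  rw [Set.not_nonempty_iff_eq_empty] at hempty
  have hunion := Set.ncard_inter_add_ncard_union s t
  rw [hempty, Set.ncard_empty] at hunion
  have hcard := Set.ncard_le_card (s ∪ t)
  rw [Nat.card_eq_fintype_card] at hcard
  omega

section Bridge

variable {S A : Type*} [Fintype A] {H : ℕ} {π t : ℕ → S → A → ℝ}

lemma l1_le_dInf [Finite S] {h : ℕ} (hh : h < H) (s : S) : l1 (π h s) (t h s) ≤ dInf H π t := by
  refine le_csSup ?_ ⟨h, hh, s, rfl⟩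
  refine ((Set.finite_range fun x : Fin H × S => l1 (π x.1 x.2) (t x.1 x.2)).subset ?_).bddAbove
  rintro _ ⟨h, hh, s, rfl⟩
  exact ⟨(⟨h, hh⟩, s), rfl⟩

lemma dInf_le {c : ℝ} (hc : 0 ≤ c) (hle : ∀ h < H, ∀ s, l1 (π h s) (t h s) ≤ c) :
    dInf H π t ≤ c :=
  Real.sSup_le (by rintro _ ⟨h, hh, s, rfl⟩; exact hle h hh s) hc

noncomputable def bridgeWeight (H : ℕ) (εb : ℝ) (Pcov : Finset (ℕ → S → A → ℝ))
    (π t : ℕ → S → A → ℝ) : ℝ :=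
  max (2 * εb - dInf H π t) 0 / ∑ t' ∈ Pcov, max (2 * εb - dInf H π t') 0

variable {εb : ℝ} {Pcov : Finset (ℕ → S → A → ℝ)}

lemma bridgeWeight_nonneg : 0 ≤ bridgeWeight H εb Pcov π t :=
  div_nonneg (le_max_right _ _) (sum_nonneg fun _ _ => le_max_right _ _)

lemma sum_bridgeWeight (hεb : 0 < εb)
    (hcover : ∃ t ∈ Pcov, ∀ h < H, ∀ s, l1 (π h s) (t h s) ≤ εb) :
    ∑ t ∈ Pcov, bridgeWeight H εb Pcov π t = 1 := by
  obtain ⟨t, ht, hclose⟩ := hcover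
  have hwt : εb ≤ max (2 * εb - dInf H π t) 0 :=
    le_max_of_le_left (by linarith [dInf_le hεb.le hclose])
  simp only [bridgeWeight]
  rw [← sum_div, div_self]
  exact (lt_of_lt_of_le hεb (hwt.trans (single_le_sum (f := fun t => max (2 * εb - dInf H π t) 0)
    (fun _ _ => le_max_right _ _) ht))).ne'

lemma l1_le_of_bridgeWeight_ne_zero [Finite S] (hw : bridgeWeight H εb Pcov π t ≠ 0) {h : ℕ}
    (hh : h < H) (s : S) : l1 (π h s) (t h s) ≤ 2 * εb := by
  have hpos : 0 < 2 * εb - dInf H π t := by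
    by_contra hle
    exact hw (by rw [bridgeWeight, max_eq_right (not_lt.1 hle), zero_div])
  linarith [l1_le_dInf (π := π) (t := t) hh s]

end Bridge

lemma abs_Jret_sub_mixture_le {S A ι : Type*} [Fintype S] [Fintype A] {H : ℕ}
    {P : ι → ℕ → S → A → (S → ℝ) → S → ℝ} {r : ℕ → S → A → (S → ℝ) → ℝ} {μ₁ : S → ℝ}
    (hμ₁ : μ₁ ∈ stdSimplex ℝ S) (hPker : ∀ m, IsKernel H (P m)) {L_T L_r : ℝ}
    (hLT : 0 ≤ L_T) (hLr : 0 ≤ L_r)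
    (hPlip : ∀ m, ∀ h, h < H → ∀ s a, ∀ μ ∈ stdSimplex ℝ S, ∀ μ' ∈ stdSimplex ℝ S,
      l1 (P m h s a μ) (P m h s a μ') ≤ L_T * l1 μ μ')
    (hrbd : ∀ h, h < H → ∀ s a (μ : S → ℝ), μ ∈ stdSimplex ℝ S →
      r h s a μ ∈ Set.Icc (0 : ℝ) (1 / (H : ℝ)))
    (hrlip : ∀ h, h < H → ∀ s a, ∀ μ ∈ stdSimplex ℝ S, ∀ μ' ∈ stdSimplex ℝ S,
      |r h s a μ - r h s a μ'| ≤ L_r * l1 μ μ')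
    {δ ε₀ : ℝ} (hδ : 0 ≤ δ) (hδ₁ : H * (H + 1) * ((1 + L_T) ^ H - 1) * δ ≤ ε₀)
    (hδ₂ : H * δ ≤ ε₀) {M : (ℕ → S → A → ℝ) → ι} {π : ℕ → S → A → ℝ} (hπ : IsPolicy π)
    {T : Finset (ℕ → S → A → ℝ)} (hT : ∀ t ∈ T, IsPolicy t) {w : (ℕ → S → A → ℝ) → ℝ}
    (hw₀ : ∀ t ∈ T, 0 ≤ w t) (hw₁ : ∑ t ∈ T, w t = 1)
    (hnear : ∀ t ∈ T, w t ≠ 0 → (∀ h < H, ∀ s, l1 (π h s) (t h s) ≤ δ) ∧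
      ∃ m, m ∈ nbhd H P μ₁ ε₀ π (M π) ∧ m ∈ nbhd H P μ₁ ε₀ t (M t))
    {σ : ℕ → S → A → ℝ} (hσ : IsPolicy σ) :
    |Jret H (P (M π)) r μ₁ σ π -
        chainExp H (fun h s a => ∑ t ∈ T, w t • frozenKernel (P (M t)) μ₁ t h s a) μ₁ σ
          (fun h s a => ∑ t ∈ T, w t * r h s a (dens (P (M t)) μ₁ t h))| ≤
      (4 * L_r * H + H + 3) * ε₀ := by
  have hε₀ : 0 ≤ ε₀ := le_trans (by positivity) hδ₂
  have hdens : ∀ t, IsPolicy t → ∀ m h, h < H → dens (P m) μ₁ t h ∈ stdSimplex ℝ S :=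
    fun t ht m h hh => dens_mem_stdSimplex hμ₁ (hPker m) ht h hh.le
  rw [Jret_eq_chainExp]
  refine (abs_chainExp_sub_mixture_le hμ₁ hσ (isStochastic_frozenKernel hμ₁ (hPker _) hπ) hw₀ hw₁
    (fun t ht => isStochastic_frozenKernel hμ₁ (hPker _) (hT t ht)) (α := L_r * (4 * ε₀))
    (C := 1 / H) (D := (H + 3) * ε₀) (by positivity) (fun t ht h hh s a => ?_)
    (fun t ht hwt h hh s a => ?_) (fun t ht hwt => ?_)).trans ?_
  · have hr := hrbd h hh s a _ (hdens t (hT t ht) (M t) h hh)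
    exact abs_le.2 ⟨by linarith [hr.1, hr.2, (by positivity : (0 : ℝ) ≤ 1 / H)], hr.2⟩
  · obtain ⟨hclose, m, hm₁, hm₂⟩ := hnear t ht hwt
    refine (hrlip h hh s a _ (hdens π hπ _ h hh) _ (hdens t (hT t ht) _ h hh)).trans ?_
    exact mul_le_mul_of_nonneg_left (l1_dens_le_of_common_neighbor hμ₁ (hPker _) (hPker m)
      (hPker _) hLT (hPlip m) hπ (hT t ht) hδ hclose hδ₁ hδ₂ (hm₁ π hπ).1
      (hm₂ t (hT t ht)).2 hh.le) hLr
  · obtain ⟨hclose, m, hm₁, hm₂⟩ := hnear t ht hwt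
    exact chainExp_l1_frozenKernel_le_of_common_neighbor hμ₁ (hPker _) (hPker m) (hPker _) hLT
      (hPlip m) hπ (hT t ht) hδ hclose hδ₁ (fun σ hσ => (hm₁ σ hσ).1) (fun σ hσ => (hm₂ σ hσ).2) hσ
  · have hH : (H : ℝ) * (1 / H) ≤ 1 := by
      rcases eq_or_ne (H : ℝ) 0 with h0 | h0 <;> simp [h0]
    nlinarith [mul_le_mul_of_nonneg_right hH (by positivity : (0 : ℝ) ≤ (H + 3) * ε₀)]

theorem bridge_NE_close_to_central_NE_general {S A ι : Type*} [Fintype S] [Fintype A] [Fintype ι]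
    (H : ℕ)
    (P : ι → ℕ → S → A → (S → ℝ) → S → ℝ) (r : ℕ → S → A → (S → ℝ) → ℝ)
    (μ₁ : S → ℝ) (hμ₁ : μ₁ ∈ stdSimplex ℝ S)
    (hPker : ∀ m, IsKernel H (P m))
    (L_T L_r : ℝ) (hLT : 0 < L_T) (hLr : 0 < L_r)
    (hPlip : ∀ m, ∀ h, h < H → ∀ s a, ∀ μ ∈ stdSimplex ℝ S, ∀ μ' ∈ stdSimplex ℝ S,
      l1 (P m h s a μ) (P m h s a μ') ≤ L_T * l1 μ μ')
    (hrbd : ∀ h, h < H → ∀ s a (μ : S → ℝ), μ ∈ stdSimplex ℝ S →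
      r h s a μ ∈ Set.Icc (0 : ℝ) (1 / (H : ℝ)))
    (hrlip : ∀ h, h < H → ∀ s a, ∀ μ ∈ stdSimplex ℝ S, ∀ μ' ∈ stdSimplex ℝ S,
      |r h s a μ - r h s a μ'| ≤ L_r * l1 μ μ')
    (ε₀ : ℝ)
    (MCtr : (ℕ → S → A → ℝ) → ι)
    (hHalf : ∀ π, IsPolicy π →
      Fintype.card ι < 2 * (nbhd H P μ₁ ε₀ π (MCtr π)).ncard)
    (εb : ℝ) (hεb : 0 < εb)
    (hεb1 : 2 * H * (H + 1) * ((1 + L_T) ^ H - 1) * εb ≤ ε₀)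
    (hεb2 : 2 * H * εb ≤ ε₀)
    (Pcov : Finset (ℕ → S → A → ℝ)) (hPcovpol : ∀ πt ∈ Pcov, IsPolicy πt)
    (hcover : ∀ π : ℕ → S → A → ℝ, IsPolicy π →
      ∃ πt ∈ Pcov, ∀ h, h < H → ∀ s, l1 (π h s) (πt h s) ≤ εb)
    (PBr : ℕ → S → A → (ℕ → S → A → ℝ) → S → ℝ)
    (rBr : ℕ → S → A → (ℕ → S → A → ℝ) → ℝ)
    (hPBr : ∀ h s a π s', PBr h s a π s' =
      (∑ πt ∈ Pcov, max (2 * εb - dInf H π πt) 0 *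
          P (MCtr πt) h s a (dens (P (MCtr πt)) μ₁ πt h) s') /
        ∑ πt ∈ Pcov, max (2 * εb - dInf H π πt) 0)
    (hrBr : ∀ h s a π, rBr h s a π =
      (∑ πt ∈ Pcov, max (2 * εb - dInf H π πt) 0 *
          r h s a (dens (P (MCtr πt)) μ₁ πt h)) /
        ∑ πt ∈ Pcov, max (2 * εb - dInf H π πt) 0)
    -- `π*` is a Nash equilibrium of the bridge model
    (πstar : ℕ → S → A → ℝ) (hπstar : IsPolicy πstar)
    (hNEBr : ∀ πt, IsPolicy πt →
      Jpam H PBr rBr μ₁ πt πstar ≤ Jpam H PBr rBr μ₁ πstar πstar) :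
    -- then `π*` has a small NE gap in the central model `M* = M_Ctr^{π*}`
    ∀ πt, IsPolicy πt →
      Jret H (P (MCtr πstar)) r μ₁ πt πstar - Jret H (P (MCtr πstar)) r μ₁ πstar πstar ≤
        2 * (1 + L_r * H) * (H + 4) * ε₀ := by
  set w := bridgeWeight H εb Pcov πstar
  have hPBr' : ∀ h s a, PBr h s a πstar =
      ∑ t ∈ Pcov, w t • frozenKernel (P (MCtr t)) μ₁ t h s a := fun h s a => by
    funext s'
    simp only [hPBr, sum_mul_div_sum, Finset.sum_apply, Pi.smul_apply, smul_eq_mul]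
    rfl
  have hrBr' : ∀ h s a, rBr h s a πstar = ∑ t ∈ Pcov, w t * r h s a (dens (P (MCtr t)) μ₁ t h) :=
    fun h s a => by rw [hrBr, sum_mul_div_sum]; rfl
  have hJ : ∀ σ, IsPolicy σ → |Jret H (P (MCtr πstar)) r μ₁ σ πstar -
      Jpam H PBr rBr μ₁ σ πstar| ≤ (4 * L_r * H + H + 3) * ε₀ := fun σ hσ => by
    rw [Jpam_eq_chainExp]
    simp only [hPBr', hrBr']
    exact abs_Jret_sub_mixture_le hμ₁ hPker hLT.le hLr.le hPlip hrbd hrlip (by positivity)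
      (by linarith) (by linarith) hπstar hPcovpol (fun _ _ => bridgeWeight_nonneg)
      (sum_bridgeWeight hεb (hcover πstar hπstar))
      (fun t ht hwt => ⟨fun h hh s => l1_le_of_bridgeWeight_ne_zero hwt hh s,
        Set.inter_nonempty_of_card_lt_two_mul_ncard (hHalf _ hπstar) (hHalf _ (hPcovpol t ht))⟩)
      hσ
  intro σ hσ
  have hε₀ : 0 ≤ ε₀ := le_trans (by positivity) hεb2
  have h₁ := abs_le.1 (hJ σ hσ)
  have h₂ := abs_le.1 (hJ πstar hπstar)
  nlinarith [hNEBr σ hσ, mul_nonneg (mul_nonneg hLr.le (sq_nonneg (H : ℝ))) hε₀]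

/-- **A Nash equilibrium of the bridge model is an approximate Nash
equilibrium of its central model.** In the bridge-model setting, if `π*` is a Nash
equilibrium of the bridge model, then its Nash-equilibrium gap in the central model
`M* = M_Ctr^{π*}` is at most `2(1 + L_r·H)(H+4)·ε₀`. -/
theorem bridge_NE_close_to_central_NE {S A ι : Type*} [Fintype S] [Fintype A] [Fintype ι]
    [Nonempty ι] (H : ℕ)
    (P : ι → ℕ → S → A → (S → ℝ) → S → ℝ) (r : ℕ → S → A → (S → ℝ) → ℝ)
    (μ₁ : S → ℝ) (hμ₁ : μ₁ ∈ stdSimplex ℝ S)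
    (hPker : ∀ m, IsKernel H (P m))
    (L_T L_r : ℝ) (hLT : 0 < L_T) (hLr : 0 < L_r)
    (hPlip : ∀ m, ∀ h, h < H → ∀ s a, ∀ μ ∈ stdSimplex ℝ S, ∀ μ' ∈ stdSimplex ℝ S,
      l1 (P m h s a μ) (P m h s a μ') ≤ L_T * l1 μ μ')
    (hrbd : ∀ h, h < H → ∀ s a (μ : S → ℝ), μ ∈ stdSimplex ℝ S →
      r h s a μ ∈ Set.Icc (0 : ℝ) (1 / (H : ℝ)))
    (hrlip : ∀ h, h < H → ∀ s a, ∀ μ ∈ stdSimplex ℝ S, ∀ μ' ∈ stdSimplex ℝ S,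
      |r h s a μ - r h s a μ'| ≤ L_r * l1 μ μ')
    (ε₀ : ℝ) (hε₀ : 0 < ε₀)
    (MCtr : (ℕ → S → A → ℝ) → ι)
    (hCtrMax : ∀ π, IsPolicy π → ∀ m : ι,
      (nbhd H P μ₁ ε₀ π m).ncard ≤ (nbhd H P μ₁ ε₀ π (MCtr π)).ncard)
    (hHalf : ∀ π, IsPolicy π →
      Fintype.card ι < 2 * (nbhd H P μ₁ ε₀ π (MCtr π)).ncard)
    (εb : ℝ) (hεb : 0 < εb)
    (hεb1 : 2 * H * (H + 1) * ((1 + L_T) ^ H - 1) * εb ≤ ε₀)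
    (hεb2 : 2 * H * εb ≤ ε₀)
    (Pcov : Finset (ℕ → S → A → ℝ)) (hPcovpol : ∀ πt ∈ Pcov, IsPolicy πt)
    (hcover : ∀ π : ℕ → S → A → ℝ, IsPolicy π →
      ∃ πt ∈ Pcov, ∀ h, h < H → ∀ s, l1 (π h s) (πt h s) ≤ εb)
    (PBr : ℕ → S → A → (ℕ → S → A → ℝ) → S → ℝ)
    (rBr : ℕ → S → A → (ℕ → S → A → ℝ) → ℝ)
    (hPBr : ∀ h s a π s', PBr h s a π s' =
      (∑ πt ∈ Pcov, max (2 * εb - dInf H π πt) 0 *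
          P (MCtr πt) h s a (dens (P (MCtr πt)) μ₁ πt h) s') /
        ∑ πt ∈ Pcov, max (2 * εb - dInf H π πt) 0)
    (hrBr : ∀ h s a π, rBr h s a π =
      (∑ πt ∈ Pcov, max (2 * εb - dInf H π πt) 0 *
          r h s a (dens (P (MCtr πt)) μ₁ πt h)) /
        ∑ πt ∈ Pcov, max (2 * εb - dInf H π πt) 0)
    -- `π*` is a Nash equilibrium of the bridge model
    (πstar : ℕ → S → A → ℝ) (hπstar : IsPolicy πstar)
    (hNEBr : ∀ πt, IsPolicy πt →
      Jpam H PBr rBr μ₁ πt πstar ≤ Jpam H PBr rBr μ₁ πstar πstar) :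
    -- then `π*` has a small NE gap in the central model `M* = M_Ctr^{π*}`
    ∀ πt, IsPolicy πt →
      Jret H (P (MCtr πstar)) r μ₁ πt πstar - Jret H (P (MCtr πstar)) r μ₁ πstar πstar ≤
        2 * (1 + L_r * H) * (H + 4) * ε₀ :=
  bridge_NE_close_to_central_NE_general H P r μ₁ hμ₁ hPker L_T L_r hLT hLr hPlip hrbd hrlip ε₀ MCtr
    hHalf εb hεb hεb1 hεb2 Pcov hPcovpol hcover PBr rBr hPBr hrBr πstar hπstar hNEBr
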